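/- For every integer n ≥ 2, C(μ(S_n)) − C(μ(P_n)) = (7n² − 23n + 18)/16, and this quantity is nonnegative; in particular C(μ(S_2)) = C(μ(P_2)), and C(μ(S_n)) > C(μ(P_n)) for all n > 2. -/

import Mathlib

open SimpleGraph Polynomial Finset

/-- The Mycielskian `μ(G)` of a simple graph `G`. Vertices `Sum.inl v` are the original
vertices `v_i`, vertices `Sum.inr (Sum.inl v)` are the shadow vertices `u_i`, and
`Sum.inr (Sum.inr ())` is the apex vertex `w`.  Edges: the edges of `G`, the edges `w u_i`,
and the edges `u_i v_j`, `u_j v_i` for every edge `v_i v_j` of `G`. -/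
def mycielskian {V : Type*} (G : SimpleGraph V) : SimpleGraph (V ⊕ V ⊕ Unit) :=
  SimpleGraph.fromRel (fun a b =>
    match a, b with
    | Sum.inl a, Sum.inl b => G.Adj a b
    | Sum.inl a, Sum.inr (Sum.inl b) => G.Adj a b
    | Sum.inr (Sum.inl _), Sum.inr (Sum.inr _) => True
    | _, _ => False)

/-- `distCount G k` is `d(G,k)`, the number of unordered pairs of distinct vertices of `G`
whose graph distance is exactly `k`. -/
noncomputable def distCount {V : Type*} (G : SimpleGraph V) (k : ℕ) : ℕ :=
  Nat.card {e : Sym2 V // ¬ e.IsDiag ∧ Sym2.lift ⟨G.dist, fun _ _ => G.dist_comm⟩ e = k}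

/-- The Hosoya polynomial `H(G,x) = Σ_{k=1}^{D(G)} d(G,k) x^k` (with rational coefficients). -/
noncomputable def hosoya {V : Type*} (G : SimpleGraph V) : Polynomial ℚ :=
  ∑ k ∈ Finset.Icc 1 G.diam, (distCount G k : ℚ) • Polynomial.X ^ k

/-- The Wiener index `W(G)`: the sum of distances over all unordered pairs of distinct
vertices (the diagonal contributes `0`, so we may sum over ordered pairs and halve). -/
noncomputable def wiener {V : Type*} (G : SimpleGraph V) [Fintype V] : ℚ :=
  (∑ u : V, ∑ v : V, (G.dist u v : ℚ)) / 2

/-- The Hyper-Wiener index `WW(G) = (1/2) Σ_{{u,v}} (d(u,v)² + d(u,v))`. -/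
noncomputable def hyperWiener {V : Type*} (G : SimpleGraph V) [Fintype V] : ℚ :=
  (∑ u : V, ∑ v : V, ((G.dist u v : ℚ) ^ 2 + (G.dist u v : ℚ))) / 4

/-- The TSZ index `TSZ(G) = (1/6) Σ_{{u,v}} d³ + (1/2) Σ_{{u,v}} d² + (1/3) Σ_{{u,v}} d`. -/
noncomputable def tszIndex {V : Type*} (G : SimpleGraph V) [Fintype V] : ℚ :=
  (∑ u : V, ∑ v : V, (G.dist u v : ℚ) ^ 3) / 12
    + (∑ u : V, ∑ v : V, (G.dist u v : ℚ) ^ 2) / 4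
    + (∑ u : V, ∑ v : V, (G.dist u v : ℚ)) / 6

/-- The Harary index `Har(G) = Σ_{{u,v}} 1/d(u,v)` (diagonal terms are `0⁻¹ = 0`). -/
noncomputable def harary {V : Type*} (G : SimpleGraph V) [Fintype V] : ℚ :=
  (∑ u : V, ∑ v : V, ((G.dist u v : ℚ))⁻¹) / 2

/-- The closeness `C(G) = Σ_u Σ_{v ≠ u} 2^{-d(u,v)}` over ordered pairs of distinct vertices. -/
noncomputable def closeness {V : Type*} (G : SimpleGraph V) [Fintype V] : ℚ :=
  letI := Classical.decEq V
  ∑ u : V, ∑ v : V, if v = u then 0 else ((1 : ℚ) / 2) ^ (G.dist u v)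

/-- `σ_{uv}`: the number of shortest paths (walks of length `dist u v`) from `u` to `v`. -/
noncomputable def numSP {V : Type*} (G : SimpleGraph V) (u v : V) : ℕ :=
  Nat.card {p : G.Walk u v // p.length = G.dist u v}

/-- `σ_{uv}(w)`: the number of shortest paths from `u` to `v` passing through `w`. -/
noncomputable def numSPthrough {V : Type*} (G : SimpleGraph V) (w u v : V) : ℕ :=
  Nat.card {p : G.Walk u v // p.length = G.dist u v ∧ w ∈ p.support}

/-- The betweenness centrality `B_w = Σ_{{u,v}, u ≠ w ≠ v} σ_{uv}(w)/σ_{uv}` of a vertex `w`,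
summed over unordered pairs of distinct vertices (ordered pairs, halved). -/
noncomputable def btwVertex {V : Type*} (G : SimpleGraph V) [Fintype V] (w : V) : ℚ :=
  letI := Classical.decEq V
  (∑ u : V, ∑ v : V,
    if u ≠ v ∧ u ≠ w ∧ v ≠ w then (numSPthrough G w u v : ℚ) / (numSP G u v) else 0) / 2

/-- The betweenness centrality of a graph: `B⁻(G) = (1/N) Σ_w B_w`. -/
noncomputable def btw {V : Type*} (G : SimpleGraph V) [Fintype V] : ℚ :=
  (∑ w : V, btwVertex G w) / (Fintype.card V)

/-- The star graph `S_n`: center `0` joined to the `n` leaves `1, …, n`. -/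
def starGraph (n : ℕ) : SimpleGraph (Fin (n + 1)) :=
  SimpleGraph.fromRel (fun a _ => a = 0)

/-- The join `G₁ ⊕ G₂` of two graphs on disjoint vertex sets: all edges of `G₁`, all edges
of `G₂`, and all edges between `V(G₁)` and `V(G₂)`. -/
def joinGraph {V₁ V₂ : Type*} (G₁ : SimpleGraph V₁) (G₂ : SimpleGraph V₂) :
    SimpleGraph (V₁ ⊕ V₂) :=
  SimpleGraph.fromRel (fun a b =>
    match a, b with
    | Sum.inl a, Sum.inl b => G₁.Adj a b
    | Sum.inr a, Sum.inr b => G₂.Adj a b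
    | Sum.inl _, Sum.inr _ => True
    | _, _ => False)

/-! In `μ(G)`, for `G` connected without isolated vertices, the distance between two original
vertices `v_a, v_b` is `min (d_G(a, b)) 4`, between a shadow `u_a` and an original `v_b ≠ v_a` it is
`min (d_G(a, b)) 3`, and every other distance is `1` or `2`. The lower bounds come from two kinds of
walks: one through the apex `w` has length at least `d(x, w) + d(w, y)`, and one avoiding `w`
collapses (`u_a ↦ a`, `v_a ↦ a`) onto a walk of `G` of the same length. So `C(μ(G))` is an explicit
combination of the closeness sums of `G` with distances truncated at `4` and at `3`. For the star
all distances are `1` or `2`; for the path these truncated sums are computed by induction on its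
length. -/

namespace SimpleGraph

variable {V : Type*} {G : SimpleGraph V} {u v w : V}

theorem le_dist_of_forall_walk {d : ℕ} (hr : G.Reachable u v)
    (h : ∀ p : G.Walk u v, d ≤ p.length) : d ≤ G.dist u v := by
  obtain ⟨p, hp⟩ := hr.exists_walk_length_eq_dist
  exact hp ▸ h p

theorem dist_add_dist_le_length_of_mem_support [DecidableEq V] (p : G.Walk u v)
    (hw : w ∈ p.support) : G.dist u w + G.dist w v ≤ p.length := by
  rw [← p.take_spec hw, Walk.length_append]
  exact add_le_add (G.dist_le _) (G.dist_le _)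

theorem dist_eq_two_of_adj_of_adj (hne : u ≠ v) (hnadj : ¬G.Adj u v) (huw : G.Adj u w)
    (hwv : G.Adj w v) : G.dist u v = 2 :=
  le_antisymm (G.dist_le (.cons huw (.cons hwv .nil)))
    ((Walk.cons huw (.cons hwv .nil)).reachable.one_lt_dist_of_ne_of_not_adj hne hnadj)

end SimpleGraph

theorem Finset.sum_range_succ_sum_range_succ_natDist {M : Type*} [AddCommMonoid M]
    (f : ℕ → M) (m : ℕ) :
    ∑ i ∈ range (m + 1), ∑ j ∈ range (m + 1), f (Nat.dist i j) =
      ∑ i ∈ range m, ∑ j ∈ range m, f (Nat.dist i j) + 2 • ∑ k ∈ range m, f (k + 1) + f 0 := by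
  have hrow : ∑ j ∈ range m, f (Nat.dist m j) = ∑ k ∈ range m, f (k + 1) := by
    rw [← sum_range_reflect]
    refine sum_congr rfl fun j hj => congrArg f ?_
    have := mem_range.mp hj
    unfold Nat.dist
    omega
  have hcol : ∑ i ∈ range m, f (Nat.dist i m) = ∑ k ∈ range m, f (k + 1) := by
    simp_rw [Nat.dist_comm _ m, hrow]
  simp only [sum_range_succ, sum_add_distrib, hcol, hrow, Nat.dist_self]
  abel

theorem sum_range_half_pow_min {d m : ℕ} (hdm : d ≤ m) :
    ∑ k ∈ range m, ((1 : ℚ) / 2) ^ min (k + 1) (d + 1) =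
      1 - (1 / 2) ^ d + (m - d) * (1 / 2) ^ (d + 1) := by
  induction m, hdm using Nat.le_induction with
  | base =>
    have hgeom : ∑ k ∈ range d, ((1 : ℚ) / 2) ^ (k + 1) = 1 - (1 / 2) ^ d := by
      induction d with
      | zero => simp
      | succ d ih => rw [sum_range_succ, ih]; ring
    rw [sum_congr rfl fun k hk => by rw [min_eq_left (by simp at hk; omega)], hgeom]
    ring
  | succ m hdm ih =>
    rw [sum_range_succ, ih, min_eq_right (by omega)]
    push_cast
    ring

noncomputable def truncatedCloseness {V : Type*} [Fintype V] (G : SimpleGraph V) (k : ℕ) : ℚ :=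
  letI := Classical.decEq V
  ∑ u : V, ∑ v : V, if v = u then 0 else ((1 : ℚ) / 2) ^ min (G.dist u v) k

open Sum

namespace mycielskian

variable {V : Type*} {G : SimpleGraph V} {a b : V}

@[simp] theorem adj_inl_inl : (mycielskian G).Adj (inl a) (inl b) ↔ G.Adj a b := by
  simp only [mycielskian, fromRel_adj, ne_eq, inl.injEq]
  exact ⟨fun h => h.2.elim id .symm, fun h => ⟨h.ne, .inl h⟩⟩

@[simp] theorem adj_inl_shadow : (mycielskian G).Adj (inl a) (inr (inl b)) ↔ G.Adj a b := by
  simp [mycielskian]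

@[simp] theorem adj_shadow_inl : (mycielskian G).Adj (inr (inl a)) (inl b) ↔ G.Adj b a := by
  simp [mycielskian]

@[simp] theorem not_adj_shadow_shadow : ¬(mycielskian G).Adj (inr (inl a)) (inr (inl b)) := by
  simp [mycielskian]

@[simp] theorem adj_shadow_apex : (mycielskian G).Adj (inr (inl a)) (inr (inr ())) := by
  simp [mycielskian]

@[simp] theorem adj_apex_shadow : (mycielskian G).Adj (inr (inr ())) (inr (inl a)) := by
  simp [mycielskian]

@[simp] theorem not_adj_inl_apex : ¬(mycielskian G).Adj (inl a) (inr (inr ())) := by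
  simp [mycielskian]

variable (G) in
def inlHom : G →g mycielskian G := ⟨inl, adj_inl_inl.mpr⟩

variable (G) in
def collapse : (mycielskian G).induce {inr (inr ())}ᶜ →g G where
  toFun
    | ⟨inl a, _⟩ => a
    | ⟨inr (inl a), _⟩ => a
    | ⟨inr (inr ()), h⟩ => (h rfl).elim
  map_rel' := by
    rintro ⟨x | x | _, hx⟩ ⟨y | y | _, hy⟩ h
    all_goals first | exact (hx rfl).elim | exact (hy rfl).elim | simp_all
    exact h.symm

@[simp] theorem collapse_inl (h) : collapse G ⟨inl a, h⟩ = a := rfl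

@[simp] theorem collapse_shadow (h) : collapse G ⟨inr (inl a), h⟩ = a := rfl

theorem dist_collapse_le_length {x y : V ⊕ V ⊕ Unit} (p : (mycielskian G).Walk x y)
    (hp : ∀ z ∈ p.support, z ∈ ({inr (inr ())}ᶜ : Set _)) :
    G.dist (collapse G ⟨x, hp x p.start_mem_support⟩) (collapse G ⟨y, hp y p.end_mem_support⟩)
      ≤ p.length := by
  have hlen : (p.induce _ hp).length = p.length := by
    have h := congrArg Walk.length (p.map_induce hp)
    rwa [Walk.length_map] at h
  simpa [hlen] using G.dist_le ((p.induce _ hp).map (collapse G))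

theorem min_dist_le_length [DecidableEq V] {x y : V ⊕ V ⊕ Unit}
    (hx : x ∈ ({inr (inr ())}ᶜ : Set _)) (hy : y ∈ ({inr (inr ())}ᶜ : Set _))
    (p : (mycielskian G).Walk x y) :
    min (G.dist (collapse G ⟨x, hx⟩) (collapse G ⟨y, hy⟩))
      ((mycielskian G).dist x (inr (inr ())) + (mycielskian G).dist (inr (inr ())) y)
      ≤ p.length := by
  by_cases hp : inr (inr ()) ∈ p.support
  · exact min_le_of_right_le (dist_add_dist_le_length_of_mem_support p hp)
  · exact min_le_of_left_le <|
      dist_collapse_le_length p fun z hz (hz' : z = _) => hp (hz' ▸ hz)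

theorem dist_shadow_apex : (mycielskian G).dist (inr (inl a)) (inr (inr ())) = 1 :=
  dist_eq_one_iff_adj.mpr adj_shadow_apex

theorem dist_shadow_shadow (hab : a ≠ b) :
    (mycielskian G).dist (inr (inl a)) (inr (inl b)) = 2 :=
  dist_eq_two_of_adj_of_adj (by simpa) not_adj_shadow_shadow adj_shadow_apex adj_apex_shadow

theorem dist_inl_apex (hab : G.Adj a b) : (mycielskian G).dist (inl a) (inr (inr ())) = 2 :=
  dist_eq_two_of_adj_of_adj (by simp) not_adj_inl_apex (adj_inl_shadow.mpr hab) adj_shadow_apex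

theorem dist_shadow_inl_self (hab : G.Adj a b) : (mycielskian G).dist (inr (inl a)) (inl a) = 2 :=
  dist_eq_two_of_adj_of_adj (by simp) (by simp) (adj_shadow_inl.mpr hab.symm)
    (adj_inl_inl.mpr hab.symm)

theorem dist_inl_inl (hG : G.Preconnected) (hdeg : ∀ a, ∃ b, G.Adj a b) (a b : V) :
    (mycielskian G).dist (inl a) (inl b) = min (G.dist a b) 4 := by
  classical
  obtain ⟨a', ha'⟩ := hdeg a
  obtain ⟨b', hb'⟩ := hdeg b
  obtain ⟨p, hp⟩ := (hG a b).exists_walk_length_eq_dist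
  let q : (mycielskian G).Walk (inl a) (inl b) :=
    .cons (adj_inl_shadow.mpr ha') <| .cons adj_shadow_apex <| .cons (adj_apex_shadow (a := b'))
      <| .cons (adj_shadow_inl.mpr hb') .nil
  refine le_antisymm (le_min ?_ (dist_le q)) (le_dist_of_forall_walk q.reachable fun r => ?_)
  · exact (dist_le (p.map (inlHom G))).trans_eq (by rw [Walk.length_map, hp])
  · simpa [dist_inl_apex ha', dist_comm (v := inl b), dist_inl_apex hb'] using
      min_dist_le_length (by simp) (by simp) r

theorem dist_shadow_inl (hG : G.Preconnected) (hdeg : ∀ a, ∃ b, G.Adj a b) (hab : a ≠ b) :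
    (mycielskian G).dist (inr (inl a)) (inl b) = min (G.dist a b) 3 := by
  classical
  obtain ⟨b', hb'⟩ := hdeg b
  obtain ⟨p, hp⟩ := (hG a b).exists_walk_length_eq_dist
  let q : (mycielskian G).Walk (inr (inl a)) (inl b) :=
    .cons adj_shadow_apex <| .cons (adj_apex_shadow (a := b')) <| .cons (adj_shadow_inl.mpr hb') .nil
  refine le_antisymm (le_min ?_ (dist_le q)) (le_dist_of_forall_walk q.reachable fun r => ?_)
  · cases p with
    | nil => exact absurd rfl hab
    | cons h p' =>
      exact (dist_le (.cons (adj_shadow_inl.mpr h.symm) (p'.map (inlHom G)))).trans_eq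
        (by rw [← hp]; exact congrArg (· + 1) (p'.length_map _))
  · simpa [dist_shadow_apex, dist_comm (v := inl b), dist_inl_apex hb'] using
      min_dist_le_length (by simp) (by simp) r

end mycielskian

/- The last two terms collect the pairs at distance `1` or `2` that do not come from distances
in `G`: shadow–shadow, shadow–apex, original–apex, and an original vertex with its own shadow. -/
open mycielskian in
theorem closeness_mycielskian {V : Type*} {G : SimpleGraph V} [Fintype V] (hG : G.Preconnected)
    (hdeg : ∀ a, ∃ b, G.Adj a b) :
    closeness (mycielskian G) = truncatedCloseness G 4 + 2 * truncatedCloseness G 3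
      + (Fintype.card V : ℚ) * (Fintype.card V - 1) / 4 + 2 * Fintype.card V := by
  classical
  have hvw (a : V) : (mycielskian G).dist (inl a) (inr (inr ())) = 2 :=
    dist_inl_apex (hdeg a).choose_spec
  have hvu (a b : V) : ((1 : ℚ) / 2) ^ (mycielskian G).dist (inl a) (inr (inl b)) =
      (if b = a then 1 / 4 else 0) + (if b = a then 0 else (1 / 2) ^ min (G.dist a b) 3) := by
    rw [dist_comm]
    obtain rfl | hab := eq_or_ne b a
    · simp [dist_shadow_inl_self (hdeg b).choose_spec]
      norm_num
    · simp [hab, dist_shadow_inl hG hdeg hab, G.dist_comm]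
  have huv (a b : V) : ((1 : ℚ) / 2) ^ (mycielskian G).dist (inr (inl a)) (inl b) =
      (if b = a then 1 / 4 else 0) + (if b = a then 0 else (1 / 2) ^ min (G.dist a b) 3) := by
    rw [dist_comm, hvu, G.dist_comm]
    obtain rfl | hab := eq_or_ne b a <;> simp [*, eq_comm]
  have huu (a b : V) : (if b = a then 0 else
      ((1 : ℚ) / 2) ^ (mycielskian G).dist (inr (inl a)) (inr (inl b))) =
      1 / 4 - if b = a then 1 / 4 else 0 := by
    obtain rfl | hab := eq_or_ne b a
    · simp
    · simp [hab, dist_shadow_shadow (Ne.symm hab)]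
      norm_num
  unfold closeness truncatedCloseness
  simp only [Fintype.sum_sum_type, Fintype.sum_unique, PUnit.default_eq_unit, inl.injEq,
    inr.injEq, reduceCtorEq, if_false, hvu, huv, huu, dist_inl_inl hG hdeg, hvw,
    dist_comm (u := inr (inr ())), dist_shadow_apex]
  simp only [sum_add_distrib, sum_sub_distrib, sum_ite_eq', mem_univ, if_true, sum_const,
    card_univ, nsmul_eq_mul]
  ring

namespace starGraph

variable {n k : ℕ}

@[simp] theorem adj_iff {a b : Fin (n + 1)} :
    (_root_.starGraph n).Adj a b ↔ a ≠ b ∧ (a = 0 ∨ b = 0) := by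
  simp [_root_.starGraph]

theorem preconnected : (_root_.starGraph n).Preconnected := by
  have h (a : Fin (n + 1)) : (_root_.starGraph n).Reachable 0 a := by
    obtain rfl | ha := eq_or_ne a 0
    · rfl
    · exact Adj.reachable (by simp [ha.symm])
  exact fun a b => (h a).symm.trans (h b)

theorem exists_adj (hn : n ≠ 0) (a : Fin (n + 1)) : ∃ b, (_root_.starGraph n).Adj a b := by
  obtain rfl | ha := eq_or_ne a 0
  · exact ⟨Fin.last n, by simp [Fin.ext_iff, hn, eq_comm]⟩
  · exact ⟨0, by simp [ha]⟩

theorem truncatedCloseness_eq (hk : 2 ≤ k) :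
    truncatedCloseness (_root_.starGraph n) k = n + n * (n - 1) / 4 := by
  classical
  have hleaf (i : Fin n) : (_root_.starGraph n).dist 0 i.succ = 1 :=
    dist_eq_one_iff_adj.mpr (by simp [(Fin.succ_ne_zero i).symm])
  have hleaves (i j : Fin n) (hij : j ≠ i) : (_root_.starGraph n).dist i.succ j.succ = 2 :=
    dist_eq_two_of_adj_of_adj (w := 0) (by simpa using hij.symm) (by simp) (by simp)
      (by simp [(Fin.succ_ne_zero j).symm])
  have hterm (i j : Fin n) : (if j = i then 0 else
      ((1 : ℚ) / 2) ^ min ((_root_.starGraph n).dist i.succ j.succ) k) =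
      1 / 4 - if j = i then 1 / 4 else 0 := by
    obtain rfl | hij := eq_or_ne j i
    · simp
    · simp [hij, hleaves i j hij, min_eq_left hk]
      norm_num
  unfold truncatedCloseness
  simp only [Fin.sum_univ_succ, dist_comm (v := (0 : Fin (n + 1))), hleaf, Fin.succ_ne_zero,
    fun i : Fin n => (Fin.succ_ne_zero i).symm, Fin.succ_inj, if_true, if_false, hterm,
    SimpleGraph.dist_self]
  simp [sum_sub_distrib, min_eq_left (by omega : 1 ≤ k)]
  ring

end starGraph

theorem closeness_mycielskian_starGraph {n : ℕ} (hn : n ≠ 0) :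
    closeness (mycielskian (_root_.starGraph n)) = (2 * (n : ℚ) ^ 2 + 9 * n + 4) / 2 := by
  rw [closeness_mycielskian starGraph.preconnected (starGraph.exists_adj hn),
    starGraph.truncatedCloseness_eq (k := 4) (by norm_num),
    starGraph.truncatedCloseness_eq (k := 3) (by norm_num), Fintype.card_fin]
  push_cast
  ring

namespace SimpleGraph.pathGraph

variable {n : ℕ}

theorem natDist_le_length {i j : Fin n} (p : (pathGraph n).Walk i j) :
    Nat.dist i j ≤ p.length := by
  induction p with
  | nil => simp
  | @cons i l j h p ih =>
    have hstep : Nat.dist i l = 1 := by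
      rw [pathGraph_adj] at h
      unfold Nat.dist
      omega
    calc Nat.dist i j ≤ Nat.dist i l + Nat.dist l j := Nat.dist.triangle_inequality _ _ _
      _ ≤ p.length + 1 := by omega

theorem dist_le_natDist (i j : Fin n) : (pathGraph n).dist i j ≤ Nat.dist i j := by
  wlog hij : i ≤ j generalizing i j
  · rw [dist_comm, Nat.dist_comm]
    exact this j i (le_of_not_ge hij)
  obtain ⟨k, hk⟩ : ∃ k, j.val = i.val + k := ⟨j - i, by omega⟩
  induction k generalizing j with
  | zero =>
    obtain rfl : j = i := Fin.ext (by omega)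
    simp
  | succ k ih =>
    let l : Fin n := ⟨i + k, by omega⟩
    have hadj : (pathGraph n).Adj l j := pathGraph_adj.mpr (.inl (by simp [l]; omega))
    calc (pathGraph n).dist i j ≤ (pathGraph n).dist i l + (pathGraph n).dist l j :=
          hadj.reachable.dist_triangle_right i
      _ ≤ Nat.dist i l + 1 :=
          add_le_add (ih l (Fin.le_iff_val_le_val.mpr (by simp [l])) rfl)
            (dist_eq_one_iff_adj.mpr hadj).le
      _ = Nat.dist i j := by simp only [Nat.dist, l]; omega

theorem dist_eq_natDist (i j : Fin n) : (pathGraph n).dist i j = Nat.dist i j :=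
  le_antisymm (dist_le_natDist i j)
    (le_dist_of_forall_walk (pathGraph_preconnected n i j) natDist_le_length)

theorem exists_adj (hn : 2 ≤ n) (i : Fin n) : ∃ j, (pathGraph n).Adj i j := by
  by_cases hi : i.val + 1 < n
  · exact ⟨⟨i + 1, hi⟩, pathGraph_adj.mpr (.inl rfl)⟩
  · exact ⟨⟨i - 1, by omega⟩, pathGraph_adj.mpr (.inr (by simp; omega))⟩

theorem truncatedCloseness_zero (k : ℕ) : truncatedCloseness (pathGraph 0) k = 0 := by
  simp [truncatedCloseness]

theorem truncatedCloseness_succ (m k : ℕ) :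
    truncatedCloseness (pathGraph (m + 1)) k =
      truncatedCloseness (pathGraph m) k + 2 * ∑ j ∈ range m, ((1 : ℚ) / 2) ^ min (j + 1) k := by
  have hrange (m : ℕ) : truncatedCloseness (pathGraph m) k = ∑ i ∈ range m, ∑ j ∈ range m,
      if Nat.dist i j = 0 then 0 else ((1 : ℚ) / 2) ^ min (Nat.dist i j) k := by
    simp only [truncatedCloseness, Finset.sum_range]
    refine sum_congr rfl fun i _ => sum_congr rfl fun j _ => ?_
    rw [dist_eq_natDist]
    obtain rfl | hij := eq_or_ne j i
    · simp
    · simp [hij, (Nat.dist_pos_of_ne (Fin.val_ne_of_ne hij.symm)).ne']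
  rw [hrange, hrange, sum_range_succ_sum_range_succ_natDist
    (fun d => if d = 0 then 0 else ((1 : ℚ) / 2) ^ min d k)]
  simp

theorem truncatedCloseness_four {m : ℕ} (hm : 3 ≤ m) :
    truncatedCloseness (pathGraph m) 4 = ((m : ℚ) ^ 2 + 21 * m - 32) / 16 := by
  induction m, hm using Nat.le_induction with
  | base =>
    simp [truncatedCloseness_succ, truncatedCloseness_zero, sum_range_succ]
    norm_num
  | succ m hm ih =>
    rw [truncatedCloseness_succ, ih, sum_range_half_pow_min (d := 3) hm]
    push_cast
    ring

theorem truncatedCloseness_three {m : ℕ} (hm : 2 ≤ m) :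
    truncatedCloseness (pathGraph m) 3 = ((m : ℚ) ^ 2 + 7 * m - 10) / 8 := by
  induction m, hm using Nat.le_induction with
  | base =>
    simp [truncatedCloseness_succ, truncatedCloseness_zero]
    norm_num
  | succ m hm ih =>
    rw [truncatedCloseness_succ, ih, sum_range_half_pow_min (d := 2) hm]
    push_cast
    ring

end SimpleGraph.pathGraph

theorem closeness_mycielskian_pathGraph {n : ℕ} (hn : 2 ≤ n) :
    closeness (mycielskian (pathGraph (n + 1))) = (9 * (n : ℚ) ^ 2 + 95 * n + 14) / 16 := by
  rw [closeness_mycielskian (pathGraph_preconnected _) (pathGraph.exists_adj (by omega)),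
    pathGraph.truncatedCloseness_four (by omega), pathGraph.truncatedCloseness_three (by omega),
    Fintype.card_fin]
  push_cast
  ring

/-- For `n ≥ 2`,
`C(μ(S_n)) - C(μ(P_n)) = (7n² - 23n + 18)/16 ≥ 0`; in particular
`C(μ(S₂)) = C(μ(P₂))` and `C(μ(S_n)) > C(μ(P_n))` for all `n > 2`. -/
theorem stmt_19 (n : ℕ) (hn : 2 ≤ n) :
    closeness (mycielskian (_root_.starGraph n)) -
        closeness (mycielskian (SimpleGraph.pathGraph (n + 1))) =
      (7 * (n : ℚ) ^ 2 - 23 * n + 18) / 16 ∧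
    0 ≤ (7 * (n : ℚ) ^ 2 - 23 * n + 18) / 16 ∧
    closeness (mycielskian (_root_.starGraph 2)) =
      closeness (mycielskian (SimpleGraph.pathGraph 3)) ∧
    (2 < n →
      closeness (mycielskian (SimpleGraph.pathGraph (n + 1))) <
        closeness (mycielskian (_root_.starGraph n))) := by
  have hdiff (m : ℕ) (hm : 2 ≤ m) : closeness (mycielskian (_root_.starGraph m)) -
      closeness (mycielskian (pathGraph (m + 1))) = ((m : ℚ) - 2) * (7 * m - 9) / 16 := by
    rw [closeness_mycielskian_starGraph (by omega), closeness_mycielskian_pathGraph hm]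
    ring
  have hn' : (2 : ℚ) ≤ n := by exact_mod_cast hn
  have hfactor : 7 * (n : ℚ) ^ 2 - 23 * n + 18 = (n - 2) * (7 * n - 9) := by ring
  refine ⟨hfactor ▸ hdiff n hn, ?_, ?_, fun h => ?_⟩
  · rw [hfactor]
    exact div_nonneg (mul_nonneg (by linarith) (by linarith)) (by norm_num)
  · exact sub_eq_zero.mp (by simpa using hdiff 2 le_rfl)
  · have h' : (3 : ℚ) ≤ n := by exact_mod_cast h
    exact sub_pos.mp ((hdiff n hn).symm ▸ div_pos (mul_pos (by linarith) (by linarith))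
      (by norm_num))
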